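/- For block covariance matrices Σ¹ₓᵧ and Σ²ₓᵧ of two jointly Gaussian vectors (with submatrices Σ¹ₓ, Σ²ₓ obtained by deleting the row and column corresponding to y), the conditional LogDet divergence is nonnegative: D_ℓD(Σ¹ₓᵧ ‖ Σ²ₓᵧ) − D_ℓD(Σ¹ₓ ‖ Σ²ₓ) ≥ 0. -/

import Mathlib

/-!
Write `S = [[A, b], [bᵀ, d]]` and let `s = d - bᵀA⁻¹b` be its Schur complement, so that
`det S = det A · s`. With `w = (-A₂⁻¹b₂, 1)` one has `S₂⁻¹ = (A₂⁻¹ ⊕ 0) + s₂⁻¹ wwᵀ`, hence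
`tr(S₂⁻¹S₁) = tr(A₂⁻¹A₁) + wᵀS₁w / s₂`, and completing the square gives `wᵀS₁w ≥ s₁`.
The difference of the two divergences is therefore at least `s₁/s₂ - log(s₁/s₂) - 1 ≥ 0`.
-/

open Matrix

/-- The LogDet divergence on `n×n` matrices (with `n` the size of the index type). -/
noncomputable def logDetDiv {n : ℕ} (A B : Matrix (Fin n) (Fin n) ℝ) : ℝ :=
  Matrix.trace (B⁻¹ * A) + Real.log (Matrix.det B / Matrix.det A) - n

namespace Matrix

theorem trace_fromBlocks {m n R : Type*} [Fintype m] [Fintype n] [AddCommMonoid R]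
    (A : Matrix m m R) (B : Matrix m n R) (C : Matrix n m R) (D : Matrix n n R) :
    trace (fromBlocks A B C D) = trace A + trace D := by
  simp [trace, Fintype.sum_sum_type]

variable {m n K : Type*} [Fintype m] [Fintype n] [DecidableEq m] [DecidableEq n]

section CommRing

variable [CommRing K]

noncomputable def schurCompl₁₁ (S : Matrix (m ⊕ n) (m ⊕ n) K) : Matrix n n K :=
  S.toBlocks₂₂ - S.toBlocks₂₁ * S.toBlocks₁₁⁻¹ * S.toBlocks₁₂

theorem det_eq_det_toBlocks₁₁_mul_det_schurCompl₁₁ (S : Matrix (m ⊕ n) (m ⊕ n) K)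
    (hA : IsUnit S.toBlocks₁₁.det) : S.det = S.toBlocks₁₁.det * S.schurCompl₁₁.det := by
  let := S.toBlocks₁₁.invertibleOfIsUnitDet hA
  conv_lhs => rw [← fromBlocks_toBlocks S]
  rw [det_fromBlocks₁₁, invOf_eq_nonsing_inv, schurCompl₁₁]

theorem inv_eq_fromBlocks_add_fromRows_mul_mul_fromCols (S : Matrix (m ⊕ n) (m ⊕ n) K)
    (hA : IsUnit S.toBlocks₁₁.det) (hSc : IsUnit S.schurCompl₁₁.det) :
    S⁻¹ = fromBlocks S.toBlocks₁₁⁻¹ 0 0 0 +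
      fromRows (-(S.toBlocks₁₁⁻¹ * S.toBlocks₁₂)) 1 * S.schurCompl₁₁⁻¹ *
        fromCols (-(S.toBlocks₂₁ * S.toBlocks₁₁⁻¹)) 1 := by
  let := S.toBlocks₁₁.invertibleOfIsUnitDet hA
  let : Invertible (S.toBlocks₂₂ - S.toBlocks₂₁ * ⅟S.toBlocks₁₁ * S.toBlocks₁₂) :=
    invertibleOfIsUnitDet _ (by rwa [invOf_eq_nonsing_inv])
  let := fromBlocks₁₁Invertible S.toBlocks₁₁ S.toBlocks₁₂ S.toBlocks₂₁ S.toBlocks₂₂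
  have h := invOf_fromBlocks₁₁_eq S.toBlocks₁₁ S.toBlocks₁₂ S.toBlocks₂₁ S.toBlocks₂₂
  simp only [invOf_eq_nonsing_inv] at h
  conv_lhs => rw [← fromBlocks_toBlocks S]
  rw [h, fromRows_mul, fromRows_mul_fromCols, fromBlocks_add]
  simp [schurCompl₁₁, Matrix.mul_assoc]

variable [StarRing K]

theorem conjTranspose_fromRows_mul_mul_fromRows {S : Matrix (m ⊕ n) (m ⊕ n) K}
    (hS : S.IsHermitian) (hA : IsUnit S.toBlocks₁₁.det) (X : Matrix m n K) :
    (fromRows X (1 : Matrix n n K))ᴴ * S * fromRows X (1 : Matrix n n K) =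
      (X + S.toBlocks₁₁⁻¹ * S.toBlocks₁₂)ᴴ * S.toBlocks₁₁ * (X + S.toBlocks₁₁⁻¹ * S.toBlocks₁₂) +
        S.schurCompl₁₁ := by
  obtain ⟨hA', hBC, -, -⟩ := isHermitian_fromBlocks_iff.mp (by rwa [fromBlocks_toBlocks])
  conv_lhs => rw [← fromBlocks_toBlocks S]
  rw [conjTranspose_fromRows_eq_fromCols_conjTranspose, fromCols_mul_fromBlocks,
    fromCols_mul_fromRows, schurCompl₁₁, ← hBC]
  simp only [conjTranspose_add, conjTranspose_mul, conjTranspose_nonsing_inv, hA'.eq,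
    conjTranspose_one, Matrix.add_mul, Matrix.mul_add, Matrix.one_mul, Matrix.mul_one,
    Matrix.mul_assoc, Matrix.mul_nonsing_inv_cancel_left _ _ hA,
    Matrix.nonsing_inv_mul_cancel_left _ _ hA]
  abel

theorem trace_inv_mul_eq_add_trace_schurCompl₁₁_inv_mul {S : Matrix (m ⊕ n) (m ⊕ n) K}
    (hS : S.IsHermitian) (hA : IsUnit S.toBlocks₁₁.det) (hSc : IsUnit S.schurCompl₁₁.det)
    (T : Matrix (m ⊕ n) (m ⊕ n) K) :
    trace (S⁻¹ * T) = trace (S.toBlocks₁₁⁻¹ * T.toBlocks₁₁) +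
      trace (S.schurCompl₁₁⁻¹ * ((fromRows (-(S.toBlocks₁₁⁻¹ * S.toBlocks₁₂)) (1 : Matrix n n K))ᴴ
        * T * fromRows (-(S.toBlocks₁₁⁻¹ * S.toBlocks₁₂)) (1 : Matrix n n K))) := by
  obtain ⟨hA', hBC, -, -⟩ := isHermitian_fromBlocks_iff.mp (by rwa [fromBlocks_toBlocks])
  have hV : fromCols (-(S.toBlocks₂₁ * S.toBlocks₁₁⁻¹)) (1 : Matrix n n K) =
      (fromRows (-(S.toBlocks₁₁⁻¹ * S.toBlocks₁₂)) 1)ᴴ := by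
    rw [conjTranspose_fromRows_eq_fromCols_conjTranspose, conjTranspose_neg, conjTranspose_mul,
      conjTranspose_nonsing_inv, hA'.eq, hBC, conjTranspose_one]
  rw [inv_eq_fromBlocks_add_fromRows_mul_mul_fromCols S hA hSc, hV, Matrix.add_mul, trace_add]
  congr 1
  · conv_lhs => rw [← fromBlocks_toBlocks T, fromBlocks_multiply, trace_fromBlocks]
    simp
  · rw [Matrix.mul_assoc, Matrix.mul_assoc, trace_mul_comm, Matrix.mul_assoc, Matrix.mul_assoc]

end CommRing

section Field

variable [Field K] [PartialOrder K] [StarRing K]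

theorem PosDef.schurCompl₁₁ {S : Matrix (m ⊕ n) (m ⊕ n) K} (hS : S.PosDef) :
    S.schurCompl₁₁.PosDef := by
  have hA : S.toBlocks₁₁.PosDef := hS.submatrix Sum.inl_injective
  have h := conjTranspose_fromRows_mul_mul_fromRows hS.1 ((isUnit_iff_isUnit_det _).mp hA.isUnit)
    (-(S.toBlocks₁₁⁻¹ * S.toBlocks₁₂))
  -- for this `X` the completed square vanishes, leaving a congruence of `S` by an injective map
  rw [neg_add_cancel, conjTranspose_zero, Matrix.zero_mul, Matrix.zero_mul, zero_add] at h
  rw [← h]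
  refine hS.conjTranspose_mul_mul_same fun x y hxy => ?_
  simpa using congrArg (· ∘ Sum.inr) hxy

end Field

theorem trace_inv_mul_fin_one [Field K] (M N : Matrix (Fin 1) (Fin 1) K) :
    trace (M⁻¹ * N) = N 0 0 / M 0 0 := by
  rw [inv_def, adjugate_fin_one, det_fin_one, Ring.inverse_eq_inv, trace_fin_one]
  simp [div_eq_inv_mul]

noncomputable def logDetDivergence {ι : Type*} [Fintype ι] [DecidableEq ι]
    (A B : Matrix ι ι ℝ) : ℝ :=
  trace (B⁻¹ * A) + Real.log (B.det / A.det) - Fintype.card ι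

theorem logDetDivergence_submatrix_equiv {ι κ : Type*} [Fintype ι] [DecidableEq ι] [Fintype κ]
    [DecidableEq κ] (A B : Matrix ι ι ℝ) (e : κ ≃ ι) :
    logDetDivergence (A.submatrix e e) (B.submatrix e e) = logDetDivergence A B := by
  simp only [logDetDivergence, inv_submatrix_equiv, submatrix_mul_equiv, det_submatrix_equiv_self,
    Fintype.card_congr e]
  congr 2
  exact e.sum_comp fun i => (B⁻¹ * A) i i

theorem logDetDivergence_toBlocks₁₁_le {S T : Matrix (m ⊕ Fin 1) (m ⊕ Fin 1) ℝ} (hS : S.PosDef)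
    (hT : T.PosDef) :
    logDetDivergence S.toBlocks₁₁ T.toBlocks₁₁ ≤ logDetDivergence S T := by
  have hSA : S.toBlocks₁₁.PosDef := hS.submatrix Sum.inl_injective
  have hTA : T.toBlocks₁₁.PosDef := hT.submatrix Sum.inl_injective
  set s := S.schurCompl₁₁ 0 0
  set t := T.schurCompl₁₁ 0 0
  have hs : 0 < s := by simpa [det_fin_one] using hS.schurCompl₁₁.det_pos
  have ht : 0 < t := by simpa [det_fin_one] using hT.schurCompl₁₁.det_pos
  have hdetS : S.det = S.toBlocks₁₁.det * s := by
    rw [det_eq_det_toBlocks₁₁_mul_det_schurCompl₁₁ S hSA.det_pos.ne'.isUnit, det_fin_one]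
  have hdetT : T.det = T.toBlocks₁₁.det * t := by
    rw [det_eq_det_toBlocks₁₁_mul_det_schurCompl₁₁ T hTA.det_pos.ne'.isUnit, det_fin_one]
  have htrace : trace (T.toBlocks₁₁⁻¹ * S.toBlocks₁₁) + s / t ≤ trace (T⁻¹ * S) := by
    rw [trace_inv_mul_eq_add_trace_schurCompl₁₁_inv_mul hT.1 hTA.det_pos.ne'.isUnit
      (by rw [det_fin_one]; exact ht.ne'.isUnit), trace_inv_mul_fin_one,
      conjTranspose_fromRows_mul_mul_fromRows hS.1 hSA.det_pos.ne'.isUnit, add_apply]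
    gcongr
    exact le_add_of_nonneg_left ((hSA.posSemidef.conjTranspose_mul_mul_same _).diag_nonneg)
  have hlog : Real.log (T.det / S.det) =
      Real.log (T.toBlocks₁₁.det / S.toBlocks₁₁.det) - Real.log (s / t) := by
    rw [hdetS, hdetT, mul_div_mul_comm, Real.log_mul (div_pos hTA.det_pos hSA.det_pos).ne'
      (div_pos ht hs).ne', Real.log_div ht.ne' hs.ne', Real.log_div hs.ne' ht.ne']
    ring
  have hlog_le : Real.log (s / t) ≤ s / t - 1 := Real.log_le_sub_one_of_pos (div_pos hs ht)
  simp only [logDetDivergence, hlog, Fintype.card_sum, Fintype.card_fin, Nat.cast_add,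
    Nat.cast_one]
  linarith

end Matrix

theorem logDetDiv_eq_logDetDivergence {n : ℕ} (A B : Matrix (Fin n) (Fin n) ℝ) :
    logDetDiv A B = logDetDivergence A B := by
  simp [logDetDiv, logDetDivergence]

/-- For `(p+1)×(p+1)` positive definite block covariance matrices `Σ¹ₓᵧ`,
`Σ²ₓᵧ` with leading `p×p` principal submatrices `Σ¹ₓ`, `Σ²ₓ` (deleting the last row and
column, which corresponds to `y`), the conditional LogDet divergence is nonnegative:
`D_ℓD(Σ¹ₓᵧ‖Σ²ₓᵧ) − D_ℓD(Σ¹ₓ‖Σ²ₓ) ≥ 0`. -/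
theorem conditional_logDetDiv_nonneg {p : ℕ}
    (S1 S2 : Matrix (Fin (p + 1)) (Fin (p + 1)) ℝ)
    (h1 : S1.PosDef) (h2 : S2.PosDef) :
    0 ≤ logDetDiv S1 S2 -
        logDetDiv (S1.submatrix (Fin.castSucc) (Fin.castSucc))
          (S2.submatrix (Fin.castSucc) (Fin.castSucc)) := by
  have hle := logDetDivergence_toBlocks₁₁_le
    (h1.submatrix (finSumFinEquiv (m := p) (n := 1)).injective)
    (h2.submatrix finSumFinEquiv.injective)
  rw [logDetDivergence_submatrix_equiv] at hle
  rw [logDetDiv_eq_logDetDivergence, logDetDiv_eq_logDetDivergence, sub_nonneg]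
  exact hle
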